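/- arXiv:1304.0797 — 5 statements merged into one kernel-verified Lean document; each statement's English description precedes it below -/
import Mathlib

section
/- Let g be a probability density on ℝ with characteristic function θ(z)=∫_ℝ e^{izx}g(x)dx, and suppose that for some δ>0 and N∈[0,1) one has |θ(z)| ≤ N for all |z| ≥ δ, and that K := ∫_ℝ g(x)²dx < ∞. Then for every integer a ≥ 2 and every b > 0, ∫_{|z| ≥ δb} |θ(z/b)|^a dz ≤ 2π · b · N^{a−2} · K. -/
open MeasureTheory Real

/-!
On the tail `|z| ≥ δ b` we have `‖θ (z / b)‖ ≤ N`, so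
`‖θ (z / b)‖ ^ a ≤ N ^ (a - 2) ‖θ (z / b)‖ ^ 2`.
Up to the substitution `z ↦ -z / (2 π b)`, `θ (z / b)` is the Fourier transform of `g`, which lies
in `L¹ ∩ L²`; there the `L¹` Fourier transform agrees almost everywhere with the `L²` one (both
define the same tempered distribution), so Plancherel gives `∫ ‖θ (z / b)‖ ^ 2 = 2 π b ∫ g ^ 2`.
-/

open FourierTransform
open scoped ContDiff SchwartzMap

theorem MeasureTheory.Lp.norm_sq_eq_integral_norm_sq {α F : Type*} [MeasurableSpace α]
    {μ : Measure α} [NormedAddCommGroup F] (G : Lp F 2 μ) :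
    ‖G‖ ^ 2 = ∫ x, ‖G x‖ ^ 2 ∂μ := by
  rw [Lp.norm_def, (Lp.memLp G).eLpNorm_eq_integral_rpow_norm two_ne_zero ENNReal.ofNat_ne_top,
    ENNReal.toReal_ofReal (by positivity), ← Real.rpow_natCast, ← Real.rpow_mul (by positivity)]
  simp

section Fourier

variable {E F : Type*} [NormedAddCommGroup E] [InnerProductSpace ℝ E] [FiniteDimensional ℝ E]
  [MeasurableSpace E] [BorelSpace E] [NormedAddCommGroup F] [InnerProductSpace ℂ F]

theorem MeasureTheory.Integrable.continuous_fourier {f : E → F} (hf : Integrable f) :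
    Continuous (𝓕 f) :=
  VectorFourier.fourierIntegral_continuous Real.continuous_fourierChar
    (innerSL ℝ).continuous₂ hf

variable [CompleteSpace F]

theorem fourier_toLp_two_ae_eq {f : E → F} (hf₁ : Integrable f) (hf₂ : MemLp f 2) :
    ((𝓕 (hf₂.toLp f) : Lp F 2 (volume : Measure E)) : E → F) =ᵐ[volume] 𝓕 f := by
  refine ae_eq_of_integral_contDiff_smul_eq ((Lp.memLp _).locallyIntegrable one_le_two)
    hf₁.continuous_fourier.locallyIntegrable fun φ hφ hφc => ?_
  have hcφ : HasCompactSupport (Complex.ofRealCLM ∘ φ) := hφc.comp_left rfl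
  have hdφ : ContDiff ℝ ∞ (Complex.ofRealCLM ∘ φ) := by fun_prop
  calc ∫ x, φ x • ((𝓕 (hf₂.toLp f) : Lp F 2 (volume : Measure E)) : E → F) x
      = ((𝓕 (hf₂.toLp f) : Lp F 2 (volume : Measure E)) : 𝓢'(E, F))
          (hcφ.toSchwartzMap hdφ) := by simp
    _ = ∫ x, 𝓕 (hcφ.toSchwartzMap hdφ) x • f x := by
      rw [← Lp.fourier_toTemperedDistribution_eq, TemperedDistribution.fourier_apply,
        Lp.toTemperedDistribution_apply]
      exact integral_congr_ae (hf₂.coeFn_toLp.mono fun x hx => by simp only [hx])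
    _ = ∫ x, φ x • 𝓕 f x := by
      simpa using! VectorFourier.integral_fourierIntegral_smul_eq_flip (L := innerₗ E)
        Real.continuous_fourierChar continuous_inner
        ((hcφ.toSchwartzMap hdφ).integrable (μ := volume)) hf₁

theorem memLp_two_fourier {f : E → F} (hf₁ : Integrable f) (hf₂ : MemLp f 2) :
    MemLp (𝓕 f) 2 :=
  (Lp.memLp (𝓕 (hf₂.toLp f))).ae_eq (fourier_toLp_two_ae_eq hf₁ hf₂)

theorem integral_norm_fourier_sq {f : E → F} (hf₁ : Integrable f) (hf₂ : MemLp f 2) :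
    ∫ ξ, ‖𝓕 f ξ‖ ^ 2 = ∫ x, ‖f x‖ ^ 2 :=
  calc ∫ ξ, ‖𝓕 f ξ‖ ^ 2
      = ‖(𝓕 (hf₂.toLp f) : Lp F 2 (volume : Measure E))‖ ^ 2 := by
        rw [Lp.norm_sq_eq_integral_norm_sq]
        exact integral_congr_ae ((fourier_toLp_two_ae_eq hf₁ hf₂).fun_comp (‖·‖ ^ 2)).symm
    _ = ‖hf₂.toLp f‖ ^ 2 := by rw [Lp.norm_fourier_eq]
    _ = ∫ x, ‖f x‖ ^ 2 := by
        rw [Lp.norm_sq_eq_integral_norm_sq]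
        exact integral_congr_ae (hf₂.coeFn_toLp.fun_comp (‖·‖ ^ 2))

end Fourier

section Real

variable {F : Type*} [NormedAddCommGroup F] [InnerProductSpace ℂ F] [CompleteSpace F]
  {f : ℝ → F}

theorem integrable_norm_fourier_comp_div_sq (hf₁ : Integrable f) (hf₂ : MemLp f 2) {c : ℝ}
    (hc : c ≠ 0) : Integrable fun z => ‖𝓕 f (z / c)‖ ^ 2 :=
  ((memLp_two_fourier hf₁ hf₂).integrable_norm_pow two_ne_zero).comp_div hc

theorem integral_norm_fourier_comp_div_sq (hf₁ : Integrable f) (hf₂ : MemLp f 2) (c : ℝ) :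
    ∫ z, ‖𝓕 f (z / c)‖ ^ 2 = |c| * ∫ x, ‖f x‖ ^ 2 := by
  rw [Measure.integral_comp_div (fun ξ => ‖𝓕 f ξ‖ ^ 2), integral_norm_fourier_sq hf₁ hf₂,
    smul_eq_mul]

end Real

theorem integral_cexp_mul_eq_fourier (f : ℝ → ℂ) (z : ℝ) :
    ∫ x : ℝ, Complex.exp (Complex.I * z * x) * f x = 𝓕 f (-z / (2 * π)) := by
  rw [Real.fourier_real_eq_integral_exp_smul]
  congr 1 with x
  rw [smul_eq_mul]
  congr 2
  push_cast
  field_simp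

theorem pow_le_pow_sub_two_mul_sq {x N : ℝ} (hx : 0 ≤ x) (hxN : x ≤ N) {a : ℕ} (ha : 2 ≤ a) :
    x ^ a ≤ N ^ (a - 2) * x ^ 2 := by
  rw [← Nat.sub_add_cancel ha, pow_add, Nat.add_sub_cancel]
  gcongr

theorem setIntegral_norm_pow_le {α E : Type*} [MeasurableSpace α] {μ : Measure α}
    [NormedAddCommGroup E] {φ : α → E} {s : Set α} (hs : MeasurableSet s) {N : ℝ}
    (hN : 0 ≤ N) (hφN : ∀ z ∈ s, ‖φ z‖ ≤ N) (hφ : Integrable (fun z => ‖φ z‖ ^ 2) μ)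
    {a : ℕ} (ha : 2 ≤ a) :
    ∫ z in s, ‖φ z‖ ^ a ∂μ ≤ N ^ (a - 2) * ∫ z, ‖φ z‖ ^ 2 ∂μ := by
  rw [← integral_const_mul]
  calc ∫ z in s, ‖φ z‖ ^ a ∂μ
      ≤ ∫ z in s, N ^ (a - 2) * ‖φ z‖ ^ 2 ∂μ :=
        integral_mono_of_nonneg (ae_of_all _ fun _ => by positivity)
          (hφ.const_mul _).integrableOn ((ae_restrict_iff' hs).2 (ae_of_all _ fun z hz =>
            pow_le_pow_sub_two_mul_sq (norm_nonneg _) (hφN z hz) ha))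
    _ ≤ ∫ z, N ^ (a - 2) * ‖φ z‖ ^ 2 ∂μ :=
        setIntegral_le_integral (hφ.const_mul _) (ae_of_all _ fun _ => by positivity)

theorem tail_integral_charFun_pow_le_general
    (g : ℝ → ℝ) (θ : ℝ → ℂ) (δ N : ℝ)
    (hg1 : ∫ x, g x = 1)
    (hθ : ∀ z : ℝ, θ z = ∫ x : ℝ, Complex.exp (Complex.I * (z : ℂ) * (x : ℂ)) * (g x : ℂ))
    (hN : N ∈ Set.Ico (0 : ℝ) 1)
    (hbound : ∀ z : ℝ, δ ≤ |z| → ‖θ z‖ ≤ N)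
    (hK : Integrable (fun x => g x ^ 2)) :
    ∀ a : ℕ, 2 ≤ a → ∀ b : ℝ, 0 < b →
      ∫ z in {z : ℝ | δ * b ≤ |z|}, ‖θ (z / b)‖ ^ a ≤
        2 * π * b * N ^ (a - 2) * ∫ x, g x ^ 2 := by
  intro a ha b hb
  have hg : Integrable g := .of_integral_ne_zero (by simp [hg1])
  have hg₁ : Integrable (fun x => (g x : ℂ)) := hg.ofReal
  have hg₂ : MemLp (fun x => (g x : ℂ)) 2 := ((memLp_two_iff_integrable_sq hg.1).2 hK).ofReal
  have hθĝ : ∀ z, θ (z / b) = 𝓕 (fun x => (g x : ℂ)) (z / -(2 * π * b)) := fun z => by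
    rw [hθ, integral_cexp_mul_eq_fourier]
    field_simp
  have hint : Integrable fun z => ‖θ (z / b)‖ ^ 2 := by
    simpa only [hθĝ] using integrable_norm_fourier_comp_div_sq hg₁ hg₂ (c := -(2 * π * b))
      (neg_ne_zero.2 (by positivity))
  calc ∫ z in {z : ℝ | δ * b ≤ |z|}, ‖θ (z / b)‖ ^ a
      ≤ N ^ (a - 2) * ∫ z, ‖θ (z / b)‖ ^ 2 :=
        setIntegral_norm_pow_le (measurableSet_le measurable_const measurable_abs) hN.1
          (fun z hz => hbound _ (by rw [abs_div, abs_of_pos hb, le_div_iff₀ hb]; exact hz))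
          hint ha
    _ = 2 * π * b * N ^ (a - 2) * ∫ x, g x ^ 2 := by
        simp only [hθĝ, integral_norm_fourier_comp_div_sq hg₁ hg₂, abs_neg, Complex.norm_real,
          Real.norm_eq_abs, sq_abs, abs_of_pos (show 0 < 2 * π * b by positivity)]
        ring

/-- If a probability density `g` on `ℝ` has characteristic function `θ` with `|θ(z)| ≤ N < 1`
for `|z| ≥ δ`, and `K = ∫ g² < ∞`, then for every integer `a ≥ 2` and every `b > 0`,
`∫_{|z| ≥ δb} |θ(z/b)|^a dz ≤ 2π · b · N^{a−2} · K`. -/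
theorem tail_integral_charFun_pow_le
    (g : ℝ → ℝ) (θ : ℝ → ℂ) (δ N : ℝ)
    (hg0 : ∀ x, 0 ≤ g x) (hg1 : ∫ x, g x = 1)
    (hθ : ∀ z : ℝ, θ z = ∫ x : ℝ, Complex.exp (Complex.I * (z : ℂ) * (x : ℂ)) * (g x : ℂ))
    (hδ : 0 < δ) (hN : N ∈ Set.Ico (0 : ℝ) 1)
    (hbound : ∀ z : ℝ, δ ≤ |z| → ‖θ z‖ ≤ N)
    (hK : Integrable (fun x => g x ^ 2)) :
    ∀ a : ℕ, 2 ≤ a → ∀ b : ℝ, 0 < b →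
      ∫ z in {z : ℝ | δ * b ≤ |z|}, ‖θ (z / b)‖ ^ a ≤
        2 * π * b * N ^ (a - 2) * ∫ x, g x ^ 2 :=
  tail_integral_charFun_pow_le_general g θ δ N hg1 hθ hN hbound hK
end

section
/- For every real k, ∫_0^∞ (1−cos v)·cos(kv)·v^{−2} dv = (π/2)·max(1−|k|, 0). -/
open MeasureTheory Real Set

/-!
Writing `v⁻² = ∫₀^∞ t e^{-tv} dt` and swapping the order of integration (Tonelli, the integrand
being nonnegative) gives `∫₀^∞ (1 - cos v) / v² dv = ∫₀^∞ dt / (1 + t²) = π / 2`, hence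
`∫₀^∞ (1 - cos (a v)) / v² dv = π |a| / 2` by scaling. The product-to-sum formula writes
`(1 - cos v) cos (k v)` as `½ (1 - cos ((1 + k) v)) + ½ (1 - cos ((1 - k) v)) - (1 - cos (k v))`,
and `(|1 + k| + |1 - k|) / 2 - |k| = max (1 - |k|) 0`.
-/

theorem integrableOn_mul_exp_neg_mul_Ioi {r : ℝ} (hr : 0 < r) :
    IntegrableOn (fun t ↦ t * exp (-(t * r))) (Ioi 0) := by
  simpa [neg_mul, mul_comm] using
    integrableOn_rpow_mul_exp_neg_mul_rpow (s := 1) (p := 1) (by norm_num) one_pos hr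

theorem integral_mul_exp_neg_mul_Ioi {r : ℝ} (hr : 0 < r) :
    ∫ t in Ioi 0, t * exp (-(t * r)) = 1 / r ^ 2 := by
  have := integral_rpow_mul_exp_neg_mul_Ioi (a := 2) two_pos hr
  norm_num [div_pow, mul_comm] at this ⊢
  exact this

theorem exp_neg_mul_mul_cos_eq_re (t v : ℝ) :
    exp (-(t * v)) * cos v = RCLike.re (Complex.exp ((-t + Complex.I) * v)) := by
  rw [RCLike.re_to_complex, Complex.exp_re]
  simp

theorem integrableOn_exp_neg_mul_mul_cos_Ioi {t : ℝ} (ht : 0 < t) :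
    IntegrableOn (fun v ↦ exp (-(t * v)) * cos v) (Ioi 0) := by
  simp_rw [exp_neg_mul_mul_cos_eq_re]
  exact (integrableOn_exp_mul_complex_Ioi (by simpa using ht) 0).re

theorem integral_exp_neg_mul_mul_cos_Ioi {t : ℝ} (ht : 0 < t) :
    ∫ v in Ioi 0, exp (-(t * v)) * cos v = t / (1 + t ^ 2) := by
  have hre : (-t + Complex.I).re < 0 := by simpa using ht
  simp_rw [exp_neg_mul_mul_cos_eq_re]
  rw [integral_re (integrableOn_exp_mul_complex_Ioi hre 0), integral_exp_mul_complex_Ioi hre]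
  simp [Complex.div_re, Complex.normSq, sq, add_comm]

theorem integrableOn_exp_neg_mul_Ioi {t : ℝ} (ht : 0 < t) :
    IntegrableOn (fun v ↦ exp (-(t * v))) (Ioi 0) := by
  simpa [neg_mul] using integrableOn_exp_mul_Ioi (neg_neg_of_pos ht) 0

theorem integral_exp_neg_mul_Ioi {t : ℝ} (ht : 0 < t) :
    ∫ v in Ioi 0, exp (-(t * v)) = 1 / t := by
  simpa [neg_mul] using integral_exp_mul_Ioi (neg_neg_of_pos ht) 0

theorem integrableOn_one_sub_cos_mul_mul_exp_neg_mul_Ioi {t : ℝ} (ht : 0 < t) :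
    IntegrableOn (fun v ↦ (1 - cos v) * (t * exp (-(t * v)))) (Ioi 0) :=
  IntegrableOn.congr_fun (((integrableOn_exp_neg_mul_Ioi ht).sub
    (integrableOn_exp_neg_mul_mul_cos_Ioi ht)).const_mul t) (fun v _ ↦ by simp only [Pi.sub_apply]; ring)
    measurableSet_Ioi

theorem integral_one_sub_cos_mul_mul_exp_neg_mul_Ioi {t : ℝ} (ht : 0 < t) :
    ∫ v in Ioi 0, (1 - cos v) * (t * exp (-(t * v))) = 1 / (1 + t ^ 2) := by
  have hsplit : ∀ v, (1 - cos v) * (t * exp (-(t * v))) =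
      t * (exp (-(t * v)) - exp (-(t * v)) * cos v) := fun v ↦ by ring
  simp_rw [hsplit]
  rw [integral_const_mul, integral_sub (integrableOn_exp_neg_mul_Ioi ht)
    (integrableOn_exp_neg_mul_mul_cos_Ioi ht), integral_exp_neg_mul_Ioi ht,
    integral_exp_neg_mul_mul_cos_Ioi ht]
  field_simp
  ring

theorem lintegral_one_sub_cos_div_sq_Ioi :
    ∫⁻ v in Ioi 0, ENNReal.ofReal ((1 - cos v) / v ^ 2) = ENNReal.ofReal (π / 2) := by
  have hK : ∀ v t : ℝ, 0 ≤ t → 0 ≤ (1 - cos v) * (t * exp (-(t * v))) := fun v t ht ↦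
    mul_nonneg (sub_nonneg.2 (cos_le_one v)) (by positivity)
  calc ∫⁻ v in Ioi 0, ENNReal.ofReal ((1 - cos v) / v ^ 2)
      = ∫⁻ v in Ioi 0, ∫⁻ t in Ioi 0, ENNReal.ofReal ((1 - cos v) * (t * exp (-(t * v)))) := by
        refine setLIntegral_congr_fun measurableSet_Ioi fun v (hv : 0 < v) ↦ ?_
        rw [← ofReal_integral_eq_lintegral_ofReal
          ((integrableOn_mul_exp_neg_mul_Ioi hv).const_mul _)
          (ae_restrict_of_forall_mem measurableSet_Ioi fun t ht ↦ hK v t (le_of_lt ht)),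
          integral_const_mul, integral_mul_exp_neg_mul_Ioi hv, mul_one_div]
    _ = ∫⁻ t in Ioi 0, ∫⁻ v in Ioi 0, ENNReal.ofReal ((1 - cos v) * (t * exp (-(t * v)))) :=
        lintegral_lintegral_swap (by fun_prop)
    _ = ∫⁻ t in Ioi 0, ENNReal.ofReal (1 + t ^ 2)⁻¹ := by
        refine setLIntegral_congr_fun measurableSet_Ioi fun t (ht : 0 < t) ↦ ?_
        rw [← ofReal_integral_eq_lintegral_ofReal
          (integrableOn_one_sub_cos_mul_mul_exp_neg_mul_Ioi ht)
          (Filter.Eventually.of_forall fun v ↦ hK v t ht.le),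
          integral_one_sub_cos_mul_mul_exp_neg_mul_Ioi ht, one_div]
    _ = ENNReal.ofReal (π / 2) := by
        rw [← ofReal_integral_eq_lintegral_ofReal integrable_inv_one_add_sq.integrableOn
          (Filter.Eventually.of_forall fun t ↦ by positivity), integral_Ioi_inv_one_add_sq,
          arctan_zero, sub_zero]

theorem one_sub_cos_div_sq_nonneg (v : ℝ) : 0 ≤ (1 - cos v) / v ^ 2 :=
  div_nonneg (sub_nonneg.2 (cos_le_one v)) (sq_nonneg v)

theorem integrableOn_one_sub_cos_div_sq_Ioi :
    IntegrableOn (fun v ↦ (1 - cos v) / v ^ 2) (Ioi 0) := by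
  refine ⟨(by fun_prop : Measurable _).aestronglyMeasurable, ?_⟩
  rw [hasFiniteIntegral_iff_ofReal (Filter.Eventually.of_forall one_sub_cos_div_sq_nonneg),
    lintegral_one_sub_cos_div_sq_Ioi]
  exact ENNReal.ofReal_lt_top

theorem integral_one_sub_cos_div_sq_Ioi : ∫ v in Ioi 0, (1 - cos v) / v ^ 2 = π / 2 := by
  rw [integral_eq_lintegral_of_nonneg_ae (Filter.Eventually.of_forall one_sub_cos_div_sq_nonneg)
    integrableOn_one_sub_cos_div_sq_Ioi.aestronglyMeasurable, lintegral_one_sub_cos_div_sq_Ioi,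
    ENNReal.toReal_ofReal (by positivity)]

theorem cos_abs_mul (a v : ℝ) : cos (|a| * v) = cos (a * v) := by
  rcases abs_choice a with h | h <;> simp [h]

theorem one_sub_cos_mul_div_sq {b : ℝ} (hb : b ≠ 0) (v : ℝ) :
    (1 - cos (b * v)) / v ^ 2 = b ^ 2 * ((1 - cos (b * v)) / (b * v) ^ 2) := by
  rw [mul_div_assoc', mul_pow, mul_div_mul_left _ _ (pow_ne_zero 2 hb)]

theorem integrableOn_one_sub_cos_mul_div_sq_Ioi (a : ℝ) :
    IntegrableOn (fun v ↦ (1 - cos (a * v)) / v ^ 2) (Ioi 0) := by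
  rcases eq_or_ne a 0 with rfl | ha
  · simp
  simp_rw [← cos_abs_mul a, one_sub_cos_mul_div_sq (abs_ne_zero.2 ha)]
  refine Integrable.const_mul ?_ _
  exact (integrableOn_Ioi_comp_mul_left_iff (fun u ↦ (1 - cos u) / u ^ 2) 0
    (abs_pos.2 ha)).2 (by simpa using integrableOn_one_sub_cos_div_sq_Ioi)

theorem integral_one_sub_cos_mul_div_sq_Ioi (a : ℝ) :
    ∫ v in Ioi 0, (1 - cos (a * v)) / v ^ 2 = π * |a| / 2 := by
  rcases eq_or_ne a 0 with rfl | ha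
  · simp
  simp_rw [← cos_abs_mul a, one_sub_cos_mul_div_sq (abs_ne_zero.2 ha)]
  rw [integral_const_mul, integral_comp_mul_left_Ioi (fun u ↦ (1 - cos u) / u ^ 2) 0
    (abs_pos.2 ha), mul_zero, integral_one_sub_cos_div_sq_Ioi, smul_eq_mul]
  field_simp

theorem one_sub_cos_mul_cos (k v : ℝ) : (1 - cos v) * cos (k * v) =
    ((1 - cos ((1 + k) * v)) + (1 - cos ((1 - k) * v))) / 2 - (1 - cos (k * v)) := by
  simp only [add_mul, sub_mul, one_mul, cos_add, cos_sub]
  ring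

theorem abs_one_add_add_abs_one_sub (k : ℝ) : |1 + k| + |1 - k| = 2 * max 1 |k| := by
  grind

/-- For every real `k`, `∫_0^∞ (1−cos v)·cos(kv)·v^{−2} dv = (π/2)·max(1−|k|, 0)`. -/
theorem integral_one_sub_cos_mul_cos_div_sq (k : ℝ) :
    ∫ v in Ioi (0 : ℝ), (1 - Real.cos v) * Real.cos (k * v) / v ^ 2 =
      π / 2 * max (1 - |k|) 0 := by
  have hf := integrableOn_one_sub_cos_mul_div_sq_Ioi
  have hsplit : ∀ v, (1 - cos v) * cos (k * v) / v ^ 2 =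
      ((1 - cos ((1 + k) * v)) / v ^ 2 + (1 - cos ((1 - k) * v)) / v ^ 2) / 2 -
        (1 - cos (k * v)) / v ^ 2 := fun v ↦ by
    rw [one_sub_cos_mul_cos]
    ring
  simp_rw [hsplit]
  rw [integral_sub (by exact ((hf _).add (hf _)).div_const 2) (hf k), integral_div,
    integral_add (hf _) (hf _), integral_one_sub_cos_mul_div_sq_Ioi,
    integral_one_sub_cos_mul_div_sq_Ioi, integral_one_sub_cos_mul_div_sq_Ioi]
  calc (π * |1 + k| / 2 + π * |1 - k| / 2) / 2 - π * |k| / 2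
      = π / 2 * ((|1 + k| + |1 - k|) / 2 - |k|) := by ring
    _ = π / 2 * max (1 - |k|) 0 := by
      rw [abs_one_add_add_abs_one_sub, mul_div_cancel_left₀ _ two_ne_zero, ← max_sub_sub_right,
        sub_self]
end

section
/- For every α ∈ (0,2) there is a constant C_α > 0 such that for all k ≥ 1, |I(α,k)| ≤ C_α·k^{α−2}, where I(α,k) := ∫_0^∞ (1−cos v)·cos(kv)·v^{−1−α} dv. Moreover I(α,k) = −(1/k)·∫_0^∞ sin(kv)·( v sin v − (1+α)(1−cos v) )·v^{−2−α} dv for every k > 0. -/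
/-!
With `c_α = ∫₀^∞ (1 - cos v) v^{-1-α} dv`, the substitution `u = mv` gives
`∫₀^∞ (1 - cos mv) v^{-1-α} dv = m^α c_α`, so the identity
`(1 - cos v) cos kv = ½ (1 - cos (k+1)v) + ½ (1 - cos (k-1)v) - (1 - cos kv)` turns `I(α,k)`,
for `k > 1`, into `c_α (½ ((k+1)^α + (k-1)^α) - k^α)`. This second difference of `t ↦ t^α` is
`O(k^{α-2})` by the mean value theorem applied twice; for `1 ≤ k ≤ 2` the trivial bound
`|I(α,k)| ≤ c_α` suffices. The identity is integration by parts against `sin (kv) / k`; the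
boundary term `(1 - cos v) v^{-1-α} sin (kv) / k` is `O(v^{2-α})` at `0` and `O(v^{-1-α})` at `∞`.
-/

open MeasureTheory Real Set Filter Topology

namespace CosKernel

lemma one_sub_cos_nonneg (x : ℝ) : 0 ≤ 1 - cos x := sub_nonneg.2 (cos_le_one x)

lemma one_sub_cos_le_two (x : ℝ) : 1 - cos x ≤ 2 := by linarith [neg_one_le_cos x]

lemma one_sub_cos_le_sq_div_two (x : ℝ) : 1 - cos x ≤ x ^ 2 / 2 := by
  linarith [one_sub_sq_div_two_le_cos (x := x)]

lemma rpow_natCast_div_rpow {x : ℝ} (hx : 0 < x) (n : ℕ) (p : ℝ) :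
    x ^ n / x ^ p = x ^ ((n : ℝ) - p) := by
  rw [rpow_sub hx, rpow_natCast]

lemma continuousOn_div_rpow {g : ℝ → ℝ} (hg : Continuous g) (p : ℝ) :
    ContinuousOn (fun x => g x / x ^ p) (Ioi 0) :=
  hg.continuousOn.div (continuousOn_id.rpow_const fun _ hx => Or.inl (ne_of_gt hx))
    fun _ hx => (rpow_pos_of_pos hx p).ne'

lemma integrableOn_Ioi_of_abs_le_rpow {f : ℝ → ℝ} {s t A : ℝ} (hs : -1 < s) (ht : t < -1)
    (hf : ContinuousOn f (Ioi 0))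
    (h_near : ∀ x ∈ Ioc (0 : ℝ) 1, |f x| ≤ A * x ^ s)
    (h_far : ∀ x ∈ Ioi (1 : ℝ), |f x| ≤ A * x ^ t) :
    IntegrableOn f (Ioi 0) := by
  rw [← Ioc_union_Ioi_eq_Ioi zero_le_one]
  refine IntegrableOn.union ?_ ?_
  · refine ((intervalIntegral.intervalIntegrable_rpow' hs).1.const_mul A).mono'
      ((hf.mono Ioc_subset_Ioi_self).aestronglyMeasurable measurableSet_Ioc) ?_
    exact (ae_restrict_mem measurableSet_Ioc).mono h_near
  · refine ((integrableOn_Ioi_rpow_of_lt ht zero_lt_one).const_mul A).mono'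
      ((hf.mono (Ioi_subset_Ioi zero_le_one)).aestronglyMeasurable measurableSet_Ioi) ?_
    exact (ae_restrict_mem measurableSet_Ioi).mono h_far

lemma abs_add_add_sub_two_mul_le {f f' f'' : ℝ → ℝ} {x h M : ℝ} (hh : 0 ≤ h)
    (hf : ∀ y ∈ Icc (x - h) (x + h), HasDerivAt f (f' y) y)
    (hf' : ∀ y ∈ Icc (x - h) (x + h), HasDerivAt f' (f'' y) y)
    (hM : ∀ y ∈ Icc (x - h) (x + h), |f'' y| ≤ M) :
    |f (x + h) + f (x - h) - 2 * f x| ≤ 2 * M * h ^ 2 := by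
  have h_mem : ∀ t ∈ Icc 0 h, x + t ∈ Icc (x - h) (x + h) ∧ x - t ∈ Icc (x - h) (x + h) :=
    fun t ht => ⟨⟨by linarith [ht.1], by linarith [ht.2]⟩, ⟨by linarith [ht.2], by linarith [ht.1]⟩⟩
  have h_lip : ∀ t ∈ Icc 0 h, |f' (x + t) - f' (x - t)| ≤ 2 * M * h := by
    intro t ht
    have := (convex_Icc (x - h) (x + h)).norm_image_sub_le_of_norm_hasDerivWithin_le
      (fun y hy => (hf' y hy).hasDerivWithinAt) hM (h_mem t ht).2 (h_mem t ht).1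
    rw [Real.norm_eq_abs, Real.norm_eq_abs, show x + t - (x - t) = 2 * t by ring,
      abs_of_nonneg (by linarith [ht.1] : (0 : ℝ) ≤ 2 * t)] at this
    have hM0 : 0 ≤ M := (abs_nonneg _).trans (hM x ⟨by linarith, by linarith⟩)
    nlinarith [ht.2]
  have h_deriv : ∀ t ∈ Icc 0 h, HasDerivWithinAt (fun t => f (x + t) + f (x - t))
      (f' (x + t) - f' (x - t)) (Icc 0 h) t := by
    intro t ht
    have h₁ := (hf _ (h_mem t ht).1).comp_const_add x t
    have h₂ := (hf _ (h_mem t ht).2).comp_const_sub x t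
    exact (h₁.add h₂).hasDerivWithinAt
  have := (convex_Icc 0 h).norm_image_sub_le_of_norm_hasDerivWithin_le h_deriv h_lip
    ⟨le_rfl, hh⟩ ⟨hh, le_rfl⟩
  simp only [add_zero, sub_zero, Real.norm_eq_abs, abs_of_nonneg hh] at this
  rwa [two_mul (f x), sq, ← mul_assoc]

variable {α : ℝ}

lemma one_sub_cos_mul_div_rpow_le_rpow {x : ℝ} (hx : 0 < x) (m : ℝ) :
    (1 - cos (m * x)) / x ^ (1 + α) ≤ m ^ 2 / 2 * x ^ (1 - α) := by
  calc (1 - cos (m * x)) / x ^ (1 + α) ≤ m ^ 2 / 2 * x ^ 2 / x ^ (1 + α) := by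
        gcongr
        linarith [one_sub_cos_le_sq_div_two (m * x)]
    _ = m ^ 2 / 2 * x ^ (1 - α) := by
        rw [mul_div_assoc, rpow_natCast_div_rpow hx]; congr 2; push_cast; ring

lemma one_sub_cos_mul_div_rpow_le_two_mul_rpow {x : ℝ} (hx : 0 < x) (m : ℝ) :
    (1 - cos (m * x)) / x ^ (1 + α) ≤ 2 * x ^ (-(1 + α)) := by
  rw [rpow_neg hx.le, ← div_eq_mul_inv]
  gcongr
  exact one_sub_cos_le_two _

lemma integrableOn_one_sub_cos_mul_div_rpow (hα : α ∈ Ioo 0 2) (m : ℝ) :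
    IntegrableOn (fun x => (1 - cos (m * x)) / x ^ (1 + α)) (Ioi 0) := by
  refine integrableOn_Ioi_of_abs_le_rpow (A := m ^ 2 / 2 + 2) (by linarith [hα.2] : -1 < 1 - α)
    (by linarith [hα.1] : -(1 + α) < -1) (continuousOn_div_rpow (by fun_prop) _) ?_ ?_
  · intro x hx
    have hx0 := hx.1
    rw [abs_of_nonneg (div_nonneg (one_sub_cos_nonneg _) (rpow_nonneg hx0.le _))]
    exact (one_sub_cos_mul_div_rpow_le_rpow hx0 m).trans
      (mul_le_mul_of_nonneg_right (by linarith) (rpow_nonneg hx0.le _))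
  · intro x hx
    have hx0 : (0 : ℝ) < x := zero_lt_one.trans hx
    rw [abs_of_nonneg (div_nonneg (one_sub_cos_nonneg _) (rpow_nonneg hx0.le _))]
    exact (one_sub_cos_mul_div_rpow_le_two_mul_rpow hx0 m).trans
      (mul_le_mul_of_nonneg_right (by nlinarith [sq_nonneg m]) (rpow_nonneg hx0.le _))

lemma integral_one_sub_cos_mul_div_rpow {m : ℝ} (hm : 0 < m) :
    ∫ x in Ioi 0, (1 - cos (m * x)) / x ^ (1 + α) =
      m ^ α * ∫ x in Ioi 0, (1 - cos x) / x ^ (1 + α) := by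
  have h_scale : ∀ x ∈ Ioi (0 : ℝ), (1 - cos (m * x)) / x ^ (1 + α) =
      m ^ (1 + α) * ((1 - cos (m * x)) / (m * x) ^ (1 + α)) := by
    intro x hx
    rw [mul_rpow hm.le (le_of_lt hx)]
    field_simp
  rw [setIntegral_congr_fun measurableSet_Ioi h_scale, integral_const_mul,
    integral_comp_mul_left_Ioi (fun u => (1 - cos u) / u ^ (1 + α)) 0 hm, mul_zero, smul_eq_mul,
    ← mul_assoc, ← rpow_neg_one, ← rpow_add hm]
  ring_nf

lemma integrableOn_one_sub_cos_div_rpow (hα : α ∈ Ioo 0 2) :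
    IntegrableOn (fun x => (1 - cos x) / x ^ (1 + α)) (Ioi 0) := by
  simpa using integrableOn_one_sub_cos_mul_div_rpow hα 1

lemma integral_one_sub_cos_div_rpow_nonneg (α : ℝ) :
    0 ≤ ∫ x in Ioi 0, (1 - cos x) / x ^ (1 + α) :=
  setIntegral_nonneg measurableSet_Ioi fun x hx =>
    div_nonneg (one_sub_cos_nonneg x) (rpow_nonneg (le_of_lt hx) _)

lemma one_sub_cos_mul_cos (x k : ℝ) :
    (1 - cos x) * cos (k * x) =
      ((1 - cos ((k + 1) * x)) + (1 - cos ((k - 1) * x))) / 2 - (1 - cos (k * x)) := by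
  rw [show (k + 1) * x = k * x + x by ring, show (k - 1) * x = k * x - x by ring, cos_add,
    cos_sub]
  ring

lemma integral_one_sub_cos_mul_cos_div_rpow (hα : α ∈ Ioo 0 2) {k : ℝ} (hk : 1 < k) :
    ∫ x in Ioi 0, (1 - cos x) * cos (k * x) / x ^ (1 + α) =
      (((k + 1) ^ α + (k - 1) ^ α) / 2 - k ^ α) *
        ∫ x in Ioi 0, (1 - cos x) / x ^ (1 + α) := by
  have h_split : ∀ x ∈ Ioi (0 : ℝ), (1 - cos x) * cos (k * x) / x ^ (1 + α) =
      (1 - cos ((k + 1) * x)) / x ^ (1 + α) / 2 + (1 - cos ((k - 1) * x)) / x ^ (1 + α) / 2 -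
        (1 - cos (k * x)) / x ^ (1 + α) := by
    intro x _
    rw [one_sub_cos_mul_cos]
    ring
  have h_int := integrableOn_one_sub_cos_mul_div_rpow hα
  have h_int_sum : IntegrableOn (fun x => (1 - cos ((k + 1) * x)) / x ^ (1 + α) / 2 +
      (1 - cos ((k - 1) * x)) / x ^ (1 + α) / 2) (Ioi 0) :=
    ((h_int _).div_const 2).add ((h_int _).div_const 2)
  rw [setIntegral_congr_fun measurableSet_Ioi h_split, integral_sub h_int_sum (h_int _),
    integral_add ((h_int _).div_const 2) ((h_int _).div_const 2), integral_div, integral_div,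
    integral_one_sub_cos_mul_div_rpow (by linarith), integral_one_sub_cos_mul_div_rpow (by linarith),
    integral_one_sub_cos_mul_div_rpow (by linarith)]
  ring

lemma abs_one_sub_cos_mul_cos_div_rpow_le {x : ℝ} (hx : 0 < x) (k : ℝ) :
    |(1 - cos x) * cos (k * x) / x ^ (1 + α)| ≤ (1 - cos x) / x ^ (1 + α) := by
  rw [abs_div, abs_mul, abs_of_nonneg (one_sub_cos_nonneg x), abs_of_pos (rpow_pos_of_pos hx _)]
  gcongr
  exact mul_le_of_le_one_right (one_sub_cos_nonneg x) (abs_cos_le_one _)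

lemma integrableOn_one_sub_cos_mul_cos_div_rpow (hα : α ∈ Ioo 0 2) (k : ℝ) :
    IntegrableOn (fun x => (1 - cos x) * cos (k * x) / x ^ (1 + α)) (Ioi 0) := by
  refine Integrable.mono' (integrableOn_one_sub_cos_div_rpow hα)
    ((continuousOn_div_rpow (by fun_prop) _).aestronglyMeasurable measurableSet_Ioi) ?_
  exact (ae_restrict_mem measurableSet_Ioi).mono fun x hx =>
    abs_one_sub_cos_mul_cos_div_rpow_le hx k

lemma abs_integral_one_sub_cos_mul_cos_div_rpow_le (hα : α ∈ Ioo 0 2) (k : ℝ) :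
    |∫ x in Ioi 0, (1 - cos x) * cos (k * x) / x ^ (1 + α)| ≤
      ∫ x in Ioi 0, (1 - cos x) / x ^ (1 + α) := by
  rw [← Real.norm_eq_abs]
  exact norm_integral_le_of_norm_le (integrableOn_one_sub_cos_div_rpow hα)
    ((ae_restrict_mem measurableSet_Ioi).mono fun x hx =>
      abs_one_sub_cos_mul_cos_div_rpow_le hx k)

lemma abs_rpow_add_one_add_rpow_sub_one_sub_le (hα : α ≤ 2) {k : ℝ} (hk : 1 < k) :
    |(k + 1) ^ α + (k - 1) ^ α - 2 * k ^ α| ≤ 2 * (|α * (α - 1)| * (k - 1) ^ (α - 2)) := by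
  have h_pos : ∀ y ∈ Icc (k - 1) (k + 1), 0 < y := fun y hy => by linarith [hy.1]
  have := abs_add_add_sub_two_mul_le (f := fun y => y ^ α) (f' := fun y => α * y ^ (α - 1))
    (f'' := fun y => α * ((α - 1) * y ^ (α - 2))) zero_le_one
    (fun y hy => hasDerivAt_rpow_const (Or.inl (h_pos y hy).ne'))
    (fun y hy => by
      simpa [sub_sub, one_add_one_eq_two] using
        (hasDerivAt_rpow_const (p := α - 1) (Or.inl (h_pos y hy).ne')).const_mul α)
    (fun y hy => by
      rw [← mul_assoc, abs_mul, abs_of_pos (rpow_pos_of_pos (h_pos y hy) _)]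
      exact mul_le_mul_of_nonneg_left
        (rpow_le_rpow_of_nonpos (by linarith) hy.1 (by linarith)) (abs_nonneg _))
  simpa using this

lemma one_div_four_le_two_rpow {β : ℝ} (hβ : -2 ≤ β) : 1 / 4 ≤ (2 : ℝ) ^ β := by
  calc (1 / 4 : ℝ) = 2 ^ (-2 : ℝ) := by rw [rpow_neg zero_le_two, rpow_two]; norm_num
    _ ≤ 2 ^ β := rpow_le_rpow_of_exponent_le one_le_two hβ

lemma rpow_sub_one_le_four_mul_rpow {β k : ℝ} (hβ : -2 ≤ β) (hβ0 : β ≤ 0) (hk : 2 ≤ k) :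
    (k - 1) ^ β ≤ 4 * k ^ β := by
  have h_two := one_div_four_le_two_rpow hβ
  calc (k - 1) ^ β ≤ (k / 2) ^ β := rpow_le_rpow_of_nonpos (by linarith) (by linarith) hβ0
    _ = k ^ β / 2 ^ β := div_rpow (by linarith) zero_le_two β
    _ ≤ 4 * k ^ β := by
        rw [div_le_iff₀ (by linarith)]
        nlinarith [rpow_pos_of_pos (by linarith : (0 : ℝ) < k) β]

lemma one_div_four_le_rpow {β k : ℝ} (hβ : -2 ≤ β) (hβ0 : β ≤ 0) (hk : 0 < k) (hk2 : k ≤ 2) :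
    1 / 4 ≤ k ^ β :=
  (one_div_four_le_two_rpow hβ).trans (rpow_le_rpow_of_nonpos hk hk2 hβ0)

lemma abs_integral_one_sub_cos_mul_cos_div_rpow_le_mul_rpow (hα : α ∈ Ioo 0 2) {k : ℝ}
    (hk : 1 ≤ k) :
    |∫ x in Ioi 0, (1 - cos x) * cos (k * x) / x ^ (1 + α)| ≤
      8 * (∫ x in Ioi 0, (1 - cos x) / x ^ (1 + α)) * k ^ (α - 2) := by
  obtain ⟨hα0, hα2⟩ := hα
  have hc := integral_one_sub_cos_div_rpow_nonneg α
  have hk_pow : 0 < k ^ (α - 2) := rpow_pos_of_pos (by linarith) _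
  rcases le_or_gt 2 k with hk2 | hk2
  · have h_coeff : |α * (α - 1)| ≤ 2 := abs_le.2 ⟨by nlinarith, by nlinarith⟩
    have h_diff := abs_rpow_add_one_add_rpow_sub_one_sub_le hα2.le (by linarith : 1 < k)
    have h_shift := rpow_sub_one_le_four_mul_rpow (by linarith) (by linarith) hk2 (β := α - 2)
    have h_half : |((k + 1) ^ α + (k - 1) ^ α) / 2 - k ^ α| ≤ 8 * k ^ (α - 2) := by
      rw [show ((k + 1) ^ α + (k - 1) ^ α) / 2 - k ^ α =
        ((k + 1) ^ α + (k - 1) ^ α - 2 * k ^ α) / 2 by ring, abs_div, abs_two]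
      have := mul_le_mul h_coeff h_shift (rpow_nonneg (by linarith) _) zero_le_two
      linarith
    rw [integral_one_sub_cos_mul_cos_div_rpow ⟨hα0, hα2⟩ (by linarith), abs_mul,
      abs_of_nonneg hc]
    nlinarith
  · have h_quarter := one_div_four_le_rpow (by linarith) (by linarith) (by linarith) hk2.le
      (β := α - 2)
    have h_trivial := abs_integral_one_sub_cos_mul_cos_div_rpow_le ⟨hα0, hα2⟩ k
    nlinarith

lemma hasDerivAt_one_sub_cos_div_rpow {x : ℝ} (hx : 0 < x) :
    HasDerivAt (fun y => (1 - cos y) / y ^ (1 + α))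
      ((x * sin x - (1 + α) * (1 - cos x)) / x ^ (2 + α)) x := by
  refine (((hasDerivAt_cos x).const_sub 1).div (hasDerivAt_rpow_const (Or.inl hx.ne'))
    (rpow_pos_of_pos hx _).ne').congr_deriv ?_
  have hxα := rpow_pos_of_pos hx α
  rw [add_sub_cancel_left, rpow_add hx, rpow_add hx, rpow_one, rpow_two]
  field_simp

lemma abs_mul_sin_sub_mul_one_sub_cos_le_sq {c : ℝ} (hc : 0 ≤ c) (x : ℝ) :
    |x * sin x - c * (1 - cos x)| ≤ (1 + c / 2) * x ^ 2 := by
  have h_sin : |x * sin x| ≤ x ^ 2 := by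
    rw [abs_mul, sq, ← abs_mul_abs_self x]
    exact mul_le_mul_of_nonneg_left abs_sin_le_abs (abs_nonneg x)
  have h_cos : |c * (1 - cos x)| ≤ c * (x ^ 2 / 2) := by
    rw [abs_mul, abs_of_nonneg hc, abs_of_nonneg (one_sub_cos_nonneg x)]
    exact mul_le_mul_of_nonneg_left (one_sub_cos_le_sq_div_two x) hc
  linarith [abs_sub (x * sin x) (c * (1 - cos x))]

lemma abs_mul_sin_sub_mul_one_sub_cos_le {c : ℝ} (hc : 0 ≤ c) (x : ℝ) :
    |x * sin x - c * (1 - cos x)| ≤ |x| + 2 * c := by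
  have h_sin : |x * sin x| ≤ |x| := by
    rw [abs_mul]
    exact mul_le_of_le_one_right (abs_nonneg x) (abs_sin_le_one x)
  have h_cos : |c * (1 - cos x)| ≤ c * 2 := by
    rw [abs_mul, abs_of_nonneg hc, abs_of_nonneg (one_sub_cos_nonneg x)]
    exact mul_le_mul_of_nonneg_left (one_sub_cos_le_two x) hc
  linarith [abs_sub (x * sin x) (c * (1 - cos x))]

lemma integrableOn_sin_mul_div_rpow (hα : α ∈ Ioo 0 2) (k : ℝ) :
    IntegrableOn (fun x => sin (k * x) * (x * sin x - (1 + α) * (1 - cos x)) / x ^ (2 + α))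
      (Ioi 0) := by
  obtain ⟨hα0, hα2⟩ := hα
  refine integrableOn_Ioi_of_abs_le_rpow (A := 3 * |k| + 7) (by linarith : -1 < 1 - α)
    (by linarith : -(1 + α) < -1) (continuousOn_div_rpow (by fun_prop) _) ?_ ?_
  · intro x ⟨hx0, _⟩
    have h_sin : |sin (k * x)| ≤ |k| * x := by
      simpa [abs_mul, abs_of_pos hx0] using abs_sin_le_abs (x := k * x)
    have h_N := abs_mul_sin_sub_mul_one_sub_cos_le_sq (by linarith : 0 ≤ 1 + α) x
    have h_pow : x ^ 3 / x ^ (2 + α) = x ^ (1 - α) := by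
      rw [rpow_natCast_div_rpow hx0]; congr 1; push_cast; ring
    have h_pow_nonneg : 0 ≤ x ^ (1 - α) := rpow_nonneg hx0.le _
    rw [abs_div, abs_mul, abs_of_pos (rpow_pos_of_pos hx0 _)]
    calc |sin (k * x)| * |x * sin x - (1 + α) * (1 - cos x)| / x ^ (2 + α)
        ≤ |k| * x * ((1 + (1 + α) / 2) * x ^ 2) / x ^ (2 + α) := by
          gcongr
      _ = |k| * (1 + (1 + α) / 2) * x ^ (1 - α) := by rw [← h_pow]; ring
      _ ≤ (3 * |k| + 7) * x ^ (1 - α) := by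
          gcongr
          nlinarith [abs_nonneg k]
  · intro x (hx : 1 < x)
    have hx0 : (0 : ℝ) < x := zero_lt_one.trans hx
    have h_N := abs_mul_sin_sub_mul_one_sub_cos_le (by linarith : 0 ≤ 1 + α) x
    rw [abs_of_pos hx0] at h_N
    have h_pow : x / x ^ (2 + α) = x ^ (-(1 + α)) := by
      have := rpow_natCast_div_rpow hx0 1 (2 + α)
      rw [pow_one] at this
      rw [this]; congr 1; push_cast; ring
    rw [abs_div, abs_mul, abs_of_pos (rpow_pos_of_pos hx0 _)]
    calc |sin (k * x)| * |x * sin x - (1 + α) * (1 - cos x)| / x ^ (2 + α)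
        ≤ 1 * (7 * x) / x ^ (2 + α) := by
          gcongr
          · exact abs_sin_le_one _
          · linarith
      _ = 7 * x ^ (-(1 + α)) := by rw [← h_pow]; ring
      _ ≤ (3 * |k| + 7) * x ^ (-(1 + α)) := by
          gcongr
          linarith [abs_nonneg k]

lemma tendsto_one_sub_cos_div_rpow_mul_sin_nhdsGT_zero (hα : α < 2) {k : ℝ} (hk : 0 < k) :
    Tendsto (fun x => (1 - cos x) / x ^ (1 + α) * (sin (k * x) / k)) (𝓝[>] 0) (𝓝 0) := by
  have h_lim : Tendsto (fun x : ℝ => x ^ (2 - α) / 2) (𝓝[>] 0) (𝓝 0) := by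
    have := ((continuousAt_rpow_const 0 (2 - α) (Or.inr (by linarith))).tendsto).div_const 2
    rw [zero_rpow (by linarith), zero_div] at this
    exact this.mono_left nhdsWithin_le_nhds
  refine squeeze_zero_norm' ?_ h_lim
  filter_upwards [self_mem_nhdsWithin] with x (hx : 0 < x)
  have h_sin : |sin (k * x) / k| ≤ x := by
    rw [abs_div, abs_of_pos hk, div_le_iff₀ hk]
    simpa [abs_mul, abs_of_pos hx, abs_of_pos hk, mul_comm] using abs_sin_le_abs (x := k * x)
  rw [Real.norm_eq_abs, abs_mul,
    abs_of_nonneg (div_nonneg (one_sub_cos_nonneg x) (rpow_nonneg hx.le _))]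
  calc (1 - cos x) / x ^ (1 + α) * |sin (k * x) / k| ≤ 1 ^ 2 / 2 * x ^ (1 - α) * x :=
        mul_le_mul (by simpa using one_sub_cos_mul_div_rpow_le_rpow (α := α) hx 1) h_sin
          (abs_nonneg _) (by positivity)
    _ = x ^ (2 - α) / 2 := by
        rw [show 2 - α = 1 - α + 1 by ring, rpow_add_one hx.ne']; ring

lemma tendsto_one_sub_cos_div_rpow_mul_sin_atTop (hα : -1 < α) {k : ℝ} (hk : 0 < k) :
    Tendsto (fun x => (1 - cos x) / x ^ (1 + α) * (sin (k * x) / k)) atTop (𝓝 0) := by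
  have h_lim : Tendsto (fun x : ℝ => 2 / k * x ^ (-(1 + α))) atTop (𝓝 0) := by
    simpa using (tendsto_rpow_neg_atTop (by linarith : 0 < 1 + α)).const_mul (2 / k)
  refine squeeze_zero_norm' ?_ h_lim
  filter_upwards [eventually_gt_atTop 0] with x hx
  have h_sin : |sin (k * x) / k| ≤ 1 / k := by
    rw [abs_div, abs_of_pos hk]
    exact div_le_div_of_nonneg_right (abs_sin_le_one _) hk.le
  rw [Real.norm_eq_abs, abs_mul,
    abs_of_nonneg (div_nonneg (one_sub_cos_nonneg x) (rpow_nonneg hx.le _))]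
  calc (1 - cos x) / x ^ (1 + α) * |sin (k * x) / k| ≤ 2 * x ^ (-(1 + α)) * (1 / k) :=
        mul_le_mul (by simpa using one_sub_cos_mul_div_rpow_le_two_mul_rpow (α := α) hx 1) h_sin
          (abs_nonneg _) (by positivity)
    _ = 2 / k * x ^ (-(1 + α)) := by ring

lemma integral_one_sub_cos_mul_cos_div_rpow_eq (hα : α ∈ Ioo 0 2) {k : ℝ} (hk : 0 < k) :
    ∫ x in Ioi 0, (1 - cos x) * cos (k * x) / x ^ (1 + α) =
      -(1 / k) * ∫ x in Ioi 0,
        sin (k * x) * (x * sin x - (1 + α) * (1 - cos x)) / x ^ (2 + α) := by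
  have h_sin : ∀ x ∈ Ioi (0 : ℝ), HasDerivAt (fun y => sin (k * y) / k) (cos (k * x)) x := by
    intro x _
    have := (((hasDerivAt_id x).const_mul k).sin).div_const k
    simpa [mul_div_cancel_left₀ _ hk.ne', mul_comm] using this
  have h_ibp := integral_Ioi_mul_deriv_eq_deriv_mul (a := 0) (a' := 0) (b' := 0)
    (fun x hx => hasDerivAt_one_sub_cos_div_rpow (α := α) hx) h_sin
    ((integrableOn_one_sub_cos_mul_cos_div_rpow hα k).congr_fun
      (fun x _ => by simp only [Pi.mul_apply]; ring) measurableSet_Ioi)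
    (IntegrableOn.congr_fun ((integrableOn_sin_mul_div_rpow hα k).const_mul (1 / k))
      (fun x _ => by simp only [Pi.mul_apply]; ring) measurableSet_Ioi)
    (tendsto_one_sub_cos_div_rpow_mul_sin_nhdsGT_zero hα.2 hk)
    (tendsto_one_sub_cos_div_rpow_mul_sin_atTop (by linarith [hα.1]) hk)
  rw [show (fun x => (1 - cos x) * cos (k * x) / x ^ (1 + α)) =
      fun x => (1 - cos x) / x ^ (1 + α) * cos (k * x) from funext fun x => by ring,
    h_ibp, sub_self, zero_sub, ← integral_const_mul, ← integral_neg]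
  congr 1
  funext x
  ring

end CosKernel

open CosKernel

/-- For `α ∈ (0,2)` there is `C_α > 0` with
`|∫_0^∞ (1−cos v) cos(kv) v^{−1−α} dv| ≤ C_α k^{α−2}` for all `k ≥ 1`; moreover for `k > 0`
the integral equals `−(1/k)∫_0^∞ sin(kv)(v sin v − (1+α)(1−cos v)) v^{−2−α} dv`. -/
theorem cos_transform_kernel_decay (α : ℝ) (hα : α ∈ Set.Ioo (0 : ℝ) 2) :
    (∃ C > 0, ∀ k : ℝ, 1 ≤ k →
      |∫ v in Ioi (0 : ℝ), (1 - Real.cos v) * Real.cos (k * v) / v ^ (1 + α)| ≤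
        C * k ^ (α - 2)) ∧
    ∀ k : ℝ, 0 < k →
      ∫ v in Ioi (0 : ℝ), (1 - Real.cos v) * Real.cos (k * v) / v ^ (1 + α) =
        -(1 / k) * ∫ v in Ioi (0 : ℝ),
          Real.sin (k * v) * (v * Real.sin v - (1 + α) * (1 - Real.cos v)) / v ^ (2 + α) := by
  have hc := integral_one_sub_cos_div_rpow_nonneg α
  refine ⟨⟨8 * (∫ x in Ioi 0, (1 - cos x) / x ^ (1 + α)) + 1, by linarith, fun k hk => ?_⟩,
    fun k hk => integral_one_sub_cos_mul_cos_div_rpow_eq hα hk⟩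
  refine (abs_integral_one_sub_cos_mul_cos_div_rpow_le_mul_rpow hα hk).trans ?_
  exact mul_le_mul_of_nonneg_right (by linarith) (rpow_nonneg (by linarith) _)
end

section
/- Fix α ∈ (0,2) and let c_α := ( ∫_ℝ (1−cos t)|t|^{−1−α} dt )^{−1}, so that g(u) = c_α(1−cos u)/|u|^{1+α} is a probability density. Let F_n be the law of ξ/n^{1/α} where ξ has density g. Then there exist δ > 0 and c(δ) > 0 such that for all n ≥ 1 and all real z with |z| ≤ δ·n^{1/α}, n·∫_ℝ (1−cos(zu)) F_n(du) ≥ c(δ)·|z|^α. -/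
/-!
After the substitution `u = x / n^{1/α}` the quantity `n ∫ (1 - cos (z u)) F_n(du)` becomes
`n ∫ g(x) (1 - cos (y x)) dx` with `y = |z| / n^{1/α} ≤ π/8`. On `(π/(2y), π/y]` one has
`1 - cos (y x) ≥ 1` and `g(x) ≥ c_α (y/π)^{1+α} (1 - cos x)`, while `1 - cos` integrates over this
interval of length `π/(2y) ≥ 4` to at least `π/(4y)`. Hence the integral is at least
`c_α y^α / (4 π^α)`, and `n y^α = |z|^α`.
-/

open MeasureTheory Real Set

theorem integrable_of_even_of_integrableOn_Ioi {E : Type*} [NormedAddCommGroup E] {f : ℝ → E}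
    (heven : ∀ t, f (-t) = f t) (hf : IntegrableOn f (Ioi 0)) : Integrable f := by
  have hIio : IntegrableOn f (Iio 0) := by
    have h := ((Measure.measurePreserving_neg volume).integrableOn_comp_preimage
      (Homeomorph.neg ℝ).measurableEmbedding).2 hf
    rwa [show Neg.neg ⁻¹' Ioi (0 : ℝ) = Iio 0 by ext; simp,
      show f ∘ Neg.neg = f from funext heven] at h
  rw [← integrableOn_univ, ← Iio_union_Ici]
  exact hIio.union ((integrableOn_Ici_iff_integrableOn_Ioi enorm_ne_top).2 hf)

theorem one_sub_cos_div_abs_rpow_nonneg (α t : ℝ) : 0 ≤ (1 - cos t) / |t| ^ α :=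
  div_nonneg (sub_nonneg.2 (cos_le_one t)) (rpow_nonneg (abs_nonneg t) _)

theorem mul_one_sub_cos_div_abs_rpow_nonneg {c : ℝ} (hc : 0 ≤ c) (α t : ℝ) :
    0 ≤ c * (1 - cos t) / |t| ^ α := by
  rw [mul_div_assoc]; exact mul_nonneg hc (one_sub_cos_div_abs_rpow_nonneg α t)

theorem measurable_one_sub_cos_div_abs_rpow (α : ℝ) :
    Measurable fun t : ℝ => (1 - cos t) / |t| ^ α := by
  fun_prop

-- Near the origin `1 - cos t ≤ t ^ 2 / 2`, so the integrand is `O(t ^ (1 - α))`.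
theorem integrableOn_Ioc_one_sub_cos_div_abs_rpow {α : ℝ} (hα : α < 2) :
    IntegrableOn (fun t : ℝ => (1 - cos t) / |t| ^ (1 + α)) (Ioc 0 1) := by
  have hdom : IntegrableOn (fun t : ℝ => t ^ (1 - α)) (Ioc 0 1) :=
    (intervalIntegrable_iff_integrableOn_Ioc_of_le zero_le_one).1
      (intervalIntegral.intervalIntegrable_rpow' (by linarith))
  refine hdom.integrable.mono (measurable_one_sub_cos_div_abs_rpow _).aestronglyMeasurable <|
    (ae_restrict_iff' measurableSet_Ioc).2 (ae_of_all _ fun t ⟨ht0, _⟩ => ?_)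
  rw [norm_of_nonneg (one_sub_cos_div_abs_rpow_nonneg _ t), norm_of_nonneg (by positivity),
    abs_of_pos ht0, div_le_iff₀ (by positivity), ← rpow_add ht0,
    show 1 - α + (1 + α) = ((2 : ℕ) : ℝ) by push_cast; ring, rpow_natCast]
  nlinarith [one_sub_sq_div_two_le_cos (x := t)]

theorem integrableOn_Ioi_one_sub_cos_div_abs_rpow {α : ℝ} (hα : 0 < α) :
    IntegrableOn (fun t : ℝ => (1 - cos t) / |t| ^ (1 + α)) (Ioi 1) := by
  have hdom : IntegrableOn (fun t : ℝ => 2 * t ^ (-(1 + α))) (Ioi 1) :=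
    (integrableOn_Ioi_rpow_of_lt (by linarith) zero_lt_one).const_mul 2
  refine hdom.integrable.mono (measurable_one_sub_cos_div_abs_rpow _).aestronglyMeasurable <|
    (ae_restrict_iff' measurableSet_Ioi).2 (ae_of_all _ fun t (ht : 1 < t) => ?_)
  have ht0 : 0 < t := one_pos.trans ht
  rw [norm_of_nonneg (one_sub_cos_div_abs_rpow_nonneg _ t), norm_of_nonneg (by positivity),
    abs_of_pos ht0, rpow_neg ht0.le, ← div_eq_mul_inv]
  gcongr
  linarith [neg_one_le_cos t]

theorem integrable_one_sub_cos_div_abs_rpow {α : ℝ} (hα₀ : 0 < α) (hα₂ : α < 2) :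
    Integrable fun t : ℝ => (1 - cos t) / |t| ^ (1 + α) := by
  refine integrable_of_even_of_integrableOn_Ioi (fun t => by rw [cos_neg, abs_neg]) ?_
  rw [← Ioc_union_Ioi_eq_Ioi zero_le_one]
  exact (integrableOn_Ioc_one_sub_cos_div_abs_rpow hα₂).union
    (integrableOn_Ioi_one_sub_cos_div_abs_rpow hα₀)

theorem integral_one_sub_cos_div_abs_rpow_pos {α : ℝ} (hα₀ : 0 < α) (hα₂ : α < 2) :
    0 < ∫ t : ℝ, (1 - cos t) / |t| ^ (1 + α) := by
  have hint := integrable_one_sub_cos_div_abs_rpow hα₀ hα₂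
  refine (integral_pos_iff_support_of_nonneg (one_sub_cos_div_abs_rpow_nonneg _) hint).2 <|
    (Measure.measure_Ioo_pos volume).2 pi_pos |>.trans_le <| measure_mono fun t ⟨ht0, htπ⟩ => ?_
  have hcos : cos t < 1 := by simpa using cos_lt_cos_of_nonneg_of_le_pi le_rfl htπ.le ht0
  exact (div_pos (sub_pos.2 hcos) (by positivity)).ne'

theorem integral_map_withDensity_ofReal {X : Type*} [MeasurableSpace X] {ν : Measure X}
    {f : X → ℝ} (hf : Measurable f) (hf₀ : ∀ x, 0 ≤ f x) {φ : X → ℝ} (hφ : Measurable φ)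
    {h : ℝ → ℝ} (hh : Measurable h) :
    ∫ u, h u ∂(ν.withDensity fun x => ENNReal.ofReal (f x)).map φ = ∫ x, f x * h (φ x) ∂ν := by
  rw [integral_map hφ.aemeasurable hh.aestronglyMeasurable,
    integral_withDensity_eq_integral_toReal_smul (by fun_prop)
      (ae_of_all _ fun _ => ENNReal.ofReal_lt_top)]
  simp only [ENNReal.toReal_ofReal (hf₀ _), smul_eq_mul]

theorem sub_sub_two_le_integral_one_sub_cos (a b : ℝ) :
    b - a - 2 ≤ ∫ x in a..b, (1 - cos x) := by
  rw [intervalIntegral.integral_sub intervalIntegrable_const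
      intervalIntegral.intervalIntegrable_cos,
    integral_cos, intervalIntegral.integral_const, smul_eq_mul, mul_one]
  linarith [sin_le_one b, neg_one_le_sin a]

theorem integrable_one_sub_cos_div_abs_rpow_mul_one_sub_cos {α : ℝ} (hα₀ : 0 < α) (hα₂ : α < 2)
    (c y : ℝ) :
    Integrable fun x => c * (1 - cos x) / |x| ^ (1 + α) * (1 - cos (y * x)) := by
  refine ((integrable_one_sub_cos_div_abs_rpow hα₀ hα₂).const_mul c).mul_bdd
    (g := fun x => 1 - cos (y * x)) (c := 2) (by fun_prop) (ae_of_all _ fun x => ?_)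
    |>.congr (ae_of_all _ fun x => ?_)
  · rw [norm_of_nonneg (sub_nonneg.2 (cos_le_one _))]
    linarith [neg_one_le_cos (y * x)]
  · simp only [mul_div_assoc]

section LowerBound

variable {α c y : ℝ}

theorem div_pi_rpow_mul_one_sub_cos_le_of_mem_Ioc {x : ℝ} (hc : 0 ≤ c) (hα : 0 ≤ 1 + α)
    (hy : 0 < y) (hx : x ∈ Ioc (π / (2 * y)) (π / y)) :
    c * (y / π) ^ (1 + α) * (1 - cos x) ≤ c * (1 - cos x) / |x| ^ (1 + α) * (1 - cos (y * x)) := by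
  obtain ⟨hax, hxb⟩ := hx
  have hx₀ : 0 < x := lt_trans (by positivity) hax
  have hyx : 1 ≤ 1 - cos (y * x) := by
    have := cos_nonpos_of_pi_div_two_le_of_le (x := y * x)
      (by rw [div_lt_iff₀ (by positivity)] at hax; linarith)
      (by rw [le_div_iff₀ hy] at hxb; linarith [pi_pos])
    linarith
  have hcx : 0 ≤ c * (1 - cos x) := mul_nonneg hc (sub_nonneg.2 (cos_le_one x))
  calc c * (y / π) ^ (1 + α) * (1 - cos x) = c * (1 - cos x) / (π / y) ^ (1 + α) := by
        rw [← inv_div π y, inv_rpow (by positivity)]; ring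
    _ ≤ c * (1 - cos x) / |x| ^ (1 + α) := by
        rw [abs_of_pos hx₀]; gcongr
    _ ≤ c * (1 - cos x) / |x| ^ (1 + α) * (1 - cos (y * x)) :=
        le_mul_of_one_le_right (by positivity) hyx

theorem le_integral_one_sub_cos_div_abs_rpow_mul_one_sub_cos (hc : 0 ≤ c) (hα₀ : 0 < α)
    (hα₂ : α < 2) (hy₀ : 0 ≤ y) (hy : y ≤ π / 8) :
    c / (4 * π ^ α) * y ^ α ≤ ∫ x, c * (1 - cos x) / |x| ^ (1 + α) * (1 - cos (y * x)) := by
  rcases hy₀.eq_or_lt with rfl | hy₀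
  · simp [zero_rpow hα₀.ne']
  have hint := integrable_one_sub_cos_div_abs_rpow_mul_one_sub_cos hα₀ hα₂ c y
  have hlen : π / (4 * y) ≤ π / y - π / (2 * y) - 2 := by
    have : 2 ≤ π / (4 * y) := by rw [le_div_iff₀ (by positivity)]; linarith
    have : π / y - π / (2 * y) = 2 * (π / (4 * y)) := by field_simp; ring
    linarith
  calc c / (4 * π ^ α) * y ^ α = c * (y / π) ^ (1 + α) * (π / (4 * y)) := by
        rw [rpow_add (by positivity), rpow_one, div_rpow hy₀.le pi_pos.le]
        field_simp
    _ ≤ c * (y / π) ^ (1 + α) * ∫ x in π / (2 * y)..π / y, (1 - cos x) := by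
        gcongr
        exact hlen.trans (sub_sub_two_le_integral_one_sub_cos _ _)
    _ = ∫ x in Ioc (π / (2 * y)) (π / y), c * (y / π) ^ (1 + α) * (1 - cos x) := by
        rw [intervalIntegral.integral_of_le (by gcongr; linarith), integral_const_mul]
    _ ≤ ∫ x in Ioc (π / (2 * y)) (π / y), c * (1 - cos x) / |x| ^ (1 + α) * (1 - cos (y * x)) :=
        setIntegral_mono_on (Continuous.integrableOn_Ioc (by fun_prop)) hint.integrableOn
          measurableSet_Ioc fun x hx =>
            div_pi_rpow_mul_one_sub_cos_le_of_mem_Ioc hc (by linarith) hy₀ hx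
    _ ≤ ∫ x, c * (1 - cos x) / |x| ^ (1 + α) * (1 - cos (y * x)) :=
        setIntegral_le_integral hint (ae_of_all _ fun x =>
          mul_nonneg (mul_one_sub_cos_div_abs_rpow_nonneg hc _ x)
            (sub_nonneg.2 (cos_le_one _)))

end LowerBound

/-- Condition (F).(a) for Example 1: with `g(u) = c_α(1−cos u)/|u|^{1+α}` a probability
density and `F_n` the law of `ξ/n^{1/α}` for `ξ` with density `g`, there exist `δ > 0` and
`c(δ) > 0` such that `n ∫ (1−cos(zu)) F_n(du) ≥ c(δ)|z|^α` for all `n ≥ 1`, `|z| ≤ δ n^{1/α}`. -/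
theorem example_one_condition_F (α : ℝ) (hα : α ∈ Set.Ioo (0 : ℝ) 2) (cα : ℝ)
    (hcα : cα = (∫ t : ℝ, (1 - Real.cos t) / |t| ^ (1 + α))⁻¹)
    (μ : Measure ℝ)
    (hμ : μ = volume.withDensity fun u => ENNReal.ofReal (cα * (1 - Real.cos u) / |u| ^ (1 + α)))
    (F : ℕ → Measure ℝ)
    (hF : ∀ n : ℕ, F n = Measure.map (fun x => x / (n : ℝ) ^ (1 / α)) μ) :
    ∃ δ > 0, ∃ c > 0, ∀ n : ℕ, 1 ≤ n → ∀ z : ℝ, |z| ≤ δ * (n : ℝ) ^ (1 / α) →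
      c * |z| ^ α ≤ (n : ℝ) * ∫ u, (1 - Real.cos (z * u)) ∂(F n) := by
  obtain ⟨hα₀, hα₂⟩ := hα
  have hcα₀ : 0 < cα := hcα ▸ inv_pos.2 (integral_one_sub_cos_div_abs_rpow_pos hα₀ hα₂)
  refine ⟨π / 8, by positivity, cα / (4 * π ^ α), by positivity, fun n hn z hz => ?_⟩
  have hn₀ : (0 : ℝ) < n := by exact_mod_cast hn
  rw [hF n, hμ, integral_map_withDensity_ofReal (by fun_prop)
    (mul_one_sub_cos_div_abs_rpow_nonneg hcα₀.le _) (by fun_prop) (by fun_prop)]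
  set s := (n : ℝ) ^ (1 / α) with hs
  have hs₀ : 0 < s := by positivity
  have hsα : s ^ α = n := by rw [hs, ← rpow_mul hn₀.le, one_div_mul_cancel hα₀.ne', rpow_one]
  have hcos : ∀ x, cos (z * (x / s)) = cos (|z| / s * x) := fun x => by
    rcases abs_choice z with h | h <;> rw [h]
    · ring_nf
    · rw [← cos_neg]; ring_nf
  simp_rw [hcos]
  calc cα / (4 * π ^ α) * |z| ^ α = n * (cα / (4 * π ^ α) * (|z| / s) ^ α) := by
        rw [div_rpow (abs_nonneg z) hs₀.le, hsα]; field_simp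
    _ ≤ _ := by
        gcongr
        exact le_integral_one_sub_cos_div_abs_rpow_mul_one_sub_cos hcα₀.le hα₀ hα₂ (by positivity)
          ((div_le_iff₀ hs₀).2 hz)
end

section
/- Let ψ(z) := ∫_ℝ (1−cos(uz)) / (2u·sinh u) du. Then ψ is well-defined and finite for every z ∈ ℝ, and there exists c > 0 such that ψ(z) ≥ c·|z| for all |z| ≥ 1. -/
/-!
The series `u sinh u = ∑ u ^ (2n+2) / (2n+1)!` has nonnegative terms, so
`u² + u⁴/6 ≤ u sinh u` for all `u`, and `u sinh u ≤ u² sinh 1` for `|u| ≤ 1`.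
Together with `1 - cos x ≤ x²/2`, the first bound dominates the integrand by
`(3z²/2) / (1 + u²)`, which is integrable. Together with `1 - cos x ≥ 2x²/π²` on `[-π, π]`,
the second bound makes the integrand at least `z² / (π² sinh 1)` on `(0, 1/|z|]`, so that
`ψ(z) ≥ |z| / (π² sinh 1)` as soon as `|z| ≥ 1`.
-/

open MeasureTheory Real Set

open Nat in
theorem hasSum_mul_sinh (u : ℝ) :
    HasSum (fun n : ℕ => (u ^ 2) ^ (n + 1) / (2 * n + 1)!) (u * sinh u) := by
  have hterm : (fun n : ℕ => (u ^ 2) ^ (n + 1) / (2 * n + 1)!) =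
      fun n => u * (u ^ (2 * n + 1) / (2 * n + 1)!) := by
    funext n; ring
  exact hterm ▸ (Real.hasSum_sinh u).mul_left u

theorem sq_add_pow_four_div_six_le_mul_sinh (u : ℝ) : u ^ 2 + u ^ 4 / 6 ≤ u * sinh u := by
  have h := sum_le_hasSum (Finset.range 2) (fun n _ => by positivity) (hasSum_mul_sinh u)
  norm_num [Finset.sum_range_succ, Nat.factorial] at h
  linarith

theorem mul_sinh_le_sq_mul_sinh_one {u : ℝ} (hu : |u| ≤ 1) : u * sinh u ≤ u ^ 2 * sinh 1 := by
  have hsinh_one := (Real.hasSum_sinh 1).mul_left (u ^ 2)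
  refine hasSum_le (fun n => ?_) (hasSum_mul_sinh u) (by simpa using hsinh_one)
  have hpow : (u ^ 2) ^ n ≤ 1 := pow_le_one₀ (sq_nonneg u) ((sq_le_one_iff_abs_le_one u).mpr hu)
  rw [pow_succ', ← div_eq_mul_inv]
  exact div_le_div_of_nonneg_right (mul_le_of_le_one_right (sq_nonneg u) hpow) (by positivity)

noncomputable def psiIntegrand (z u : ℝ) : ℝ := (1 - cos (u * z)) / (2 * u * sinh u)

theorem psiIntegrand_nonneg (z u : ℝ) : 0 ≤ psiIntegrand z u :=
  div_nonneg (by linarith [cos_le_one (u * z)])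
    (by nlinarith [sq_add_pow_four_div_six_le_mul_sinh u, sq_nonneg u, pow_two_nonneg (u ^ 2)])

theorem psiIntegrand_le_mul_inv_one_add_sq (z u : ℝ) :
    psiIntegrand z u ≤ 3 * z ^ 2 / 2 * (1 + u ^ 2)⁻¹ := by
  rcases eq_or_ne u 0 with rfl | hu
  · simp [psiIntegrand]; positivity
  have hu2 : 0 < u ^ 2 := by positivity
  have hden : u ^ 2 * (1 + u ^ 2) / 3 ≤ 2 * u * sinh u := by
    nlinarith [sq_add_pow_four_div_six_le_mul_sinh u]
  have hnum : 1 - cos (u * z) ≤ (u * z) ^ 2 / 2 := by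
    linarith [one_sub_sq_div_two_le_cos (x := u * z)]
  calc psiIntegrand z u ≤ (u * z) ^ 2 / 2 / (u ^ 2 * (1 + u ^ 2) / 3) :=
        div_le_div₀ (by positivity) hnum (by positivity) hden
    _ = 3 * z ^ 2 / 2 * (1 + u ^ 2)⁻¹ := by field_simp

theorem integrable_psiIntegrand (z : ℝ) : Integrable (psiIntegrand z) := by
  refine (integrable_inv_one_add_sq.const_mul (3 * z ^ 2 / 2)).mono' ?_ ?_
  · exact ((measurable_const.sub (measurable_id.mul_const z).cos).div
      ((measurable_const.mul measurable_id).mul measurable_sinh)).aestronglyMeasurable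
  · refine Filter.Eventually.of_forall fun u => ?_
    rw [norm_of_nonneg (psiIntegrand_nonneg z u)]
    exact psiIntegrand_le_mul_inv_one_add_sq z u

theorem sq_div_le_psiIntegrand {z u : ℝ} (hu0 : u ≠ 0) (hu : |u| ≤ 1) (huz : |u * z| ≤ π) :
    z ^ 2 / (π ^ 2 * sinh 1) ≤ psiIntegrand z u := by
  have hu2 : 0 < u ^ 2 := by positivity
  have hnum : 2 / π ^ 2 * (u * z) ^ 2 ≤ 1 - cos (u * z) := by
    linarith [cos_le_one_sub_mul_cos_sq huz]
  have hden : 2 * u * sinh u ≤ 2 * (u ^ 2 * sinh 1) := by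
    linarith [mul_sinh_le_sq_mul_sinh_one hu]
  have hpos : 0 < 2 * u * sinh u := by
    nlinarith [sq_add_pow_four_div_six_le_mul_sinh u, pow_two_nonneg (u ^ 2)]
  calc z ^ 2 / (π ^ 2 * sinh 1) = 2 / π ^ 2 * (u * z) ^ 2 / (2 * (u ^ 2 * sinh 1)) := by
        field_simp
    _ ≤ psiIntegrand z u := div_le_div₀ (by linarith [cos_le_one (u * z)]) hnum hpos hden

theorem inv_mul_abs_le_integral_psiIntegrand {z : ℝ} (hz : 1 ≤ |z|) :
    (π ^ 2 * sinh 1)⁻¹ * |z| ≤ ∫ u, psiIntegrand z u := by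
  have hz0 : 0 < |z| := one_pos.trans_le hz
  have hbound : ∀ u ∈ Ioc 0 |z|⁻¹, z ^ 2 / (π ^ 2 * sinh 1) ≤ psiIntegrand z u := by
    rintro u ⟨hu0, hu⟩
    have huz : |u * z| ≤ 1 := by
      rw [abs_mul, abs_of_pos hu0]
      exact (mul_le_mul_of_nonneg_right hu hz0.le).trans_eq (inv_mul_cancel₀ hz0.ne')
    exact sq_div_le_psiIntegrand hu0.ne'
      (by rw [abs_of_pos hu0]; exact hu.trans (inv_le_one_of_one_le₀ hz))
      (huz.trans (by linarith [pi_gt_three]))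
  calc (π ^ 2 * sinh 1)⁻¹ * |z| = z ^ 2 / (π ^ 2 * sinh 1) * volume.real (Ioc 0 |z|⁻¹) := by
        rw [Real.volume_real_Ioc_of_le (by positivity), sub_zero, ← sq_abs z]
        field_simp
    _ ≤ ∫ u in Ioc 0 |z|⁻¹, psiIntegrand z u :=
        setIntegral_ge_of_const_le_real measurableSet_Ioc measure_Ioc_lt_top.ne hbound
          (integrable_psiIntegrand z).integrableOn
    _ ≤ ∫ u, psiIntegrand z u :=
        setIntegral_le_integral (integrable_psiIntegrand z)
          (Filter.Eventually.of_forall (psiIntegrand_nonneg z))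

/-- Condition (B) for Example 2: `ψ(z) = ∫_ℝ (1−cos(uz))/(2u sinh u) du` is well defined
(the integrand is integrable) for every `z`, and `ψ(z) ≥ c|z|` for `|z| ≥ 1`, some `c > 0`. -/
theorem example_two_condition_B :
    (∀ z : ℝ, Integrable (fun u : ℝ => (1 - Real.cos (u * z)) / (2 * u * Real.sinh u))) ∧
    ∃ c > 0, ∀ z : ℝ, 1 ≤ |z| →
      c * |z| ≤ ∫ u : ℝ, (1 - Real.cos (u * z)) / (2 * u * Real.sinh u) :=
  ⟨integrable_psiIntegrand, (π ^ 2 * sinh 1)⁻¹,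
    inv_pos.mpr (mul_pos (by positivity) (sinh_pos_iff.mpr one_pos)),
    fun _ hz => inv_mul_abs_le_integral_psiIntegrand hz⟩
end
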